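/- Let ⟨λ_n : n < ω⟩ be a nondecreasing sequence of infinite cardinals, and let ⟨π_n : n < ω⟩ and ⟨D_n : 1 ≤ n < ω⟩ satisfy: (1) π_0 = D_1 is a normal measure on λ_0; (2) for 0 < i < ω, D_i is an ultrafilter on λ_0 × ⋯ × λ_{i-1}, and π_i is a function with domain λ_0 × ⋯ × λ_{i-1} such that for some K ∈ D_i the restriction π_i ↾ K is one-to-one and all values of π_i are normal measures on λ_i; (3) D_{i+1} = D_i * π_i, the sum of D_i with the family of ultrafilters ⟨π_i(x) : x ∈ λ_0 × ⋯ × λ_{i-1}⟩, identifying λ_0 × ⋯ × λ_i with the disjoint sum ⊕_x λ_i. Then for every n ≥ 1 and every function f with domain λ_0 × ⋯ × λ_{n-1}, either f is D_n-equivalent to a one-to-one function, or there exist k < n and a function h with domain λ_0 × ⋯ × λ_{k-1} (a constant when k = 0) such that f is D_n-equivalent to the function (x_0, …, x_{n-1}) ↦ h(x_0, …, x_{k-1}). -/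

import Mathlib

universe u v

/-- An ultrafilter `W` on a set is `κ`-complete if the intersection of any family of
fewer than `κ` members of `W` is again a member of `W`. -/
def UFComplete (κ : Cardinal.{u}) {X : Type u} (W : Ultrafilter X) : Prop :=
  ∀ (ι : Type u) (f : ι → Set X), Cardinal.mk ι < κ → (∀ i, f i ∈ W) → (⋂ i, f i) ∈ W

/-- A normal measure on an infinite cardinal `κ` (whose underlying set of ordinals below
`κ` is realized as `κ.ord.toType`) is a `κ`-complete nonprincipal ultrafilter `U` on `κ`
such that every function `f : κ → κ` regressive on a set in `U` is constant on a set
in `U`. -/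
def IsNormalMeasure (κ : Cardinal.{u}) (U : Ultrafilter κ.ord.ToType) : Prop :=
  UFComplete κ U ∧ (∀ x : κ.ord.ToType, ({x} : Set κ.ord.ToType) ∉ U) ∧
    ∀ f : κ.ord.ToType → κ.ord.ToType,
      {ξ | f ξ < ξ} ∈ U → ∃ c, {ξ | f ξ = c} ∈ U

/-- The product `λ_0 × ⋯ × λ_n`, realized as the type of tuples
`∀ i : Fin (n+1), (λ_i).ord.toType`. -/
abbrev Tup (lam : ℕ → Cardinal.{u}) (n : ℕ) : Type u :=
  ∀ i : Fin n, (lam i).ord.ToType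

/-!
By induction on `m`, splitting off the last coordinate: write `f (x, y)` with `y ∈ λ_m`. If for
`D_m`-almost every `x` the section `f (x, ·)` is `π_m(x)`-almost constant, `f` factors through the
first `m` coordinates and the induction hypothesis applies. Otherwise, by normality, almost every
section is one-to-one on a set of measure one. Two distinct normal measures are never mapped onto
each other by a function that is one-to-one on a set of measure one, so the sections over distinct
`x` (which carry distinct measures) have disjoint ranges after shrinking; enumerating the `x` by
ordinals below `λ_m` and taking a diagonal intersection makes all sections jointly one-to-one on a
`D_{m+1}`-set. As every `D_{m+1}`-set has full cardinality, a function that is one-to-one on such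
a set agrees almost everywhere with a one-to-one function.
-/

open Cardinal Set Filter Function

theorem Set.InjOn.invFunOn_comp {α β γ : Type*} [Nonempty α] {F : γ → β} {G : α → β}
    {I : Set γ} (hF : InjOn F I) (J : Set α) : InjOn (invFunOn G J ∘ F) (I ∩ F ⁻¹' (G '' J)) :=
  fun a ha b hb hab => hF ha.1 hb.1 <| by
    rw [← invFunOn_eq ha.2, ← invFunOn_eq hb.2]
    exact congrArg G hab

theorem mk_Iic_ord_toType_lt {κ : Cardinal.{u}} (hκ : ℵ₀ ≤ κ) (x : κ.ord.ToType) :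
    #(Iic x) < κ := by
  have h := Cardinal.mk_Iic_lt x (by rw [mk_ord_toType, Ordinal.type_toType])
    (by rwa [mk_ord_toType])
  rwa [mk_ord_toType] at h

namespace IsNormalMeasure

variable {κ : Cardinal.{u}} {U V : Ultrafilter κ.ord.ToType}

theorem notMem_of_mk_lt (hU : IsNormalMeasure κ U) {A : Set κ.ord.ToType} (hA : #A < κ) :
    A ∉ U := by
  have h := hU.1 A (fun a => {(a : κ.ord.ToType)}ᶜ) hA
    fun a => Ultrafilter.compl_mem_iff_notMem.2 (hU.2.1 a)
  rwa [← compl_iUnion, iUnion_of_singleton_coe, Ultrafilter.compl_mem_iff_notMem] at h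

theorem le_mk_of_mem (hU : IsNormalMeasure κ U) {A : Set κ.ord.ToType} (hA : A ∈ U) :
    κ ≤ #A :=
  not_lt.1 fun h => hU.notMem_of_mk_lt h hA

theorem Ioi_mem (hU : IsNormalMeasure κ U) (hκ : ℵ₀ ≤ κ) (x : κ.ord.ToType) : Ioi x ∈ U := by
  rw [← compl_Iic]
  exact Ultrafilter.compl_mem_iff_notMem.2 (hU.notMem_of_mk_lt (mk_Iic_ord_toType_lt hκ x))

theorem diagonal_mem (hU : IsNormalMeasure κ U) {X : Type*} {e : X → κ.ord.ToType}
    (he : Injective e) {G : X → Set κ.ord.ToType} (hG : ∀ x, G x ∈ U) :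
    ∀ᶠ y in U, ∀ x, e x < y → y ∈ G x := by
  by_contra hbad
  rw [← Ultrafilter.eventually_not] at hbad
  simp only [not_forall, exists_prop] at hbad
  have : Nonempty X := let ⟨_, x, _⟩ := hbad.exists; ⟨x⟩
  choose! g hg using fun y (hy : ∃ x, e x < y ∧ y ∉ G x) => hy
  obtain ⟨c, hc⟩ := hU.2.2 (e ∘ g) (by filter_upwards [hbad] with y hy using (hg y hy).1)
  replace hc : ∀ᶠ y in U, e (g y) = c := hc
  obtain ⟨y₀, hy₀⟩ := hc.exists
  obtain ⟨y, hyc, hy, hyG⟩ := (hc.and (hbad.and (hG (g y₀)))).exists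
  exact (hg y hy).2 (he (hyc.trans hy₀.symm) ▸ hyG)

theorem injOn_or_eventually_const (hU : IsNormalMeasure κ U) {Y : Type*} (f : κ.ord.ToType → Y) :
    (∃ A ∈ U, InjOn f A) ∨ ∃ c, ∀ᶠ ξ in U, f ξ = c := by
  let g : κ.ord.ToType → κ.ord.ToType := fun ξ => wellFounded_lt.min {η | f η = f ξ} ⟨ξ, rfl⟩
  have hfg : ∀ ξ, f (g ξ) = f ξ := fun ξ => wellFounded_lt.min_mem {η | f η = f ξ} _
  have hg_le : ∀ ξ, g ξ ≤ ξ := fun ξ => not_lt.1 (wellFounded_lt.not_lt_min {η | f η = f ξ} rfl)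
  by_cases hreg : {ξ | g ξ < ξ} ∈ U
  · obtain ⟨c, hc⟩ := hU.2.2 g hreg
    refine Or.inr ⟨f c, ?_⟩
    filter_upwards [hc] with ξ hξ
    rw [← hfg ξ, hξ]
  · refine Or.inl ⟨{ξ | g ξ = ξ}, ?_, fun a ha b hb hab => ?_⟩
    · filter_upwards [Ultrafilter.compl_mem_iff_notMem.2 hreg] with ξ hξ
      exact (hg_le ξ).antisymm (not_lt.1 hξ)
    · rw [← show g a = a from ha, ← show g b = b from hb]
      simp only [g, hab]

theorem eq_of_map_eq (hU : IsNormalMeasure κ U) (hV : IsNormalMeasure κ V)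
    {g : κ.ord.ToType → κ.ord.ToType} {R : Set κ.ord.ToType} (hR : R ∈ U) (hg : InjOn g R)
    (hUV : U.map g = V) : U = V := by
  subst hUV
  have := nonempty_of_neBot (U : Filter κ.ord.ToType)
  have hlt : ¬∀ᶠ ξ in U, g ξ < ξ := fun h =>
    let ⟨c, hc⟩ := hU.2.2 g h
    hV.2.1 c hc
  have hgt : ¬∀ᶠ ξ in U, ξ ∈ R ∧ ξ < g ξ := by
    intro hW
    set W := {ξ | ξ ∈ R ∧ ξ < g ξ}
    have hinv : LeftInvOn (invFunOn g W) g W := (hg.mono fun _ h => h.1).leftInvOn_invFunOn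
    have hreg : ∀ᶠ ξ in U, invFunOn g W (g ξ) < g ξ := by
      filter_upwards [hW] with ξ hξ
      have hex : ∃ a ∈ W, g a = g ξ := ⟨ξ, hξ, rfl⟩
      exact (invFunOn_mem hex).2.trans_eq (invFunOn_eq hex)
    obtain ⟨c, hc⟩ := hV.2.2 _ hreg
    refine hU.2.1 c (mem_of_superset (inter_mem hW hc) ?_)
    rintro ξ ⟨hξ, hξc⟩
    exact (hinv hξ).symm.trans hξc
  have hid : g =ᶠ[U] id := by
    filter_upwards [Ultrafilter.eventually_not.2 hlt, Ultrafilter.eventually_not.2 hgt, hR]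
      with ξ h₁ h₂ hξ
    exact (not_lt.1 fun h => h₂ ⟨hξ, h⟩).antisymm (not_lt.1 h₁)
  exact Ultrafilter.coe_injective (by rw [Ultrafilter.coe_map, map_congr hid, map_id])

theorem exists_separating (hU : IsNormalMeasure κ U) (hV : IsNormalMeasure κ V) (hUV : U ≠ V)
    {Y : Type*} {F G : κ.ord.ToType → Y} {I J : Set κ.ord.ToType} (hI : I ∈ U) (hJ : J ∈ V)
    (hF : InjOn F I) (hG : InjOn G J) :
    ∃ A ∈ U, ∃ B ∈ V, ∀ y ∈ A, ∀ y' ∈ B, F y ≠ G y' := by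
  have := nonempty_of_neBot (U : Filter κ.ord.ToType)
  set R := I ∩ F ⁻¹' (G '' J)
  by_cases hR : R ∈ U
  · set g := invFunOn G J ∘ F
    obtain ⟨B, hB, hgB⟩ : ∃ B ∈ V, g ⁻¹' B ∉ U := by
      by_contra! h
      exact hUV (hU.eq_of_map_eq hV hR (hF.invFunOn_comp J) (Ultrafilter.eq_of_le h))
    refine ⟨R \ g ⁻¹' B, sdiff_mem hR (Ultrafilter.compl_mem_iff_notMem.2 hgB), B ∩ J,
      inter_mem hB hJ, ?_⟩
    rintro y ⟨hyR, hyB⟩ y' ⟨hy'B, hy'J⟩ hFG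
    have : g y = y' := hG (invFunOn_mem hyR.2) hy'J ((invFunOn_eq hyR.2).trans hFG)
    exact hyB (show g y ∈ B from this ▸ hy'B)
  · refine ⟨I \ R, sdiff_mem hI (Ultrafilter.compl_mem_iff_notMem.2 hR), J, hJ, ?_⟩
    rintro y ⟨hyI, hyR⟩ y' hy' hFG
    exact hyR ⟨hyI, y', hy', hFG.symm⟩

theorem eventually_notMem_image_Iic (hU : IsNormalMeasure κ U) (hκ : ℵ₀ ≤ κ) {Y : Type*}
    {F : κ.ord.ToType → Y} {I : Set κ.ord.ToType} (hI : I ∈ U) (hF : InjOn F I)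
    (G : κ.ord.ToType → Y) (α : κ.ord.ToType) : ∀ᶠ y in U, F y ∉ G '' Iic α := by
  have := nonempty_of_neBot (U : Filter κ.ord.ToType)
  have hsmall : #(I ∩ F ⁻¹' (G '' Iic α) : Set _) < κ := by
    rw [← mk_image_eq_of_injOn _ _ (hF.invFunOn_comp (Iic α))]
    refine (mk_le_mk_of_subset ?_).trans_lt (mk_Iic_ord_toType_lt hκ α)
    rintro _ ⟨y, hy, rfl⟩
    exact invFunOn_mem hy.2
  filter_upwards [hI, Ultrafilter.compl_mem_iff_notMem.2 (hU.notMem_of_mk_lt hsmall)]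
    with y hyI hy hyG
  exact hy ⟨hyI, hyG⟩

theorem exists_injOn_uncurry (hκ : ℵ₀ ≤ κ) {X : Type u} {Y : Type*} (hX : #X ≤ κ)
    {P : X → Ultrafilter κ.ord.ToType} (hP : ∀ x, IsNormalMeasure κ (P x)) (hPinj : Injective P)
    {F : X → κ.ord.ToType → Y} (hF : ∀ x, ∃ I ∈ P x, InjOn (F x) I) :
    ∃ S : X → Set κ.ord.ToType, (∀ x, S x ∈ P x) ∧ InjOn (uncurry F) {q | q.2 ∈ S q.1} := by
  obtain ⟨e⟩ : Nonempty (X ↪ κ.ord.ToType) := by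
    rwa [← lift_mk_le', lift_id, lift_id, mk_ord_toType]
  choose I hI hFI using hF
  have hsep : ∀ x x', ∃ A ∈ P x, ∃ B ∈ P x', x ≠ x' → ∀ y ∈ A, ∀ y' ∈ B, F x y ≠ F x' y' := by
    intro x x'
    by_cases h : x = x'
    · exact ⟨univ, univ_mem, univ, univ_mem, fun h' => absurd h h'⟩
    · obtain ⟨A, hA, B, hB, hAB⟩ := (hP x).exists_separating (hP x') (hPinj.ne h) (hI x) (hI x')
        (hFI x) (hFI x')
      exact ⟨A, hA, B, hB, fun _ => hAB⟩
  choose A hA B hB hAB using hsep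
  -- For `y ∈ S x` past `e x'`, `F x y` avoids the values of `F x'` on `B x x'` and on `Iic (e x)`.
  let G x x' := A x x' ∩ B x' x ∩ {y | F x y ∉ F x' '' Iic (e x)}
  have hG : ∀ x x', G x x' ∈ P x := fun x x' => inter_mem (inter_mem (hA x x') (hB x' x))
    ((hP x).eventually_notMem_image_Iic hκ (hI x) (hFI x) _ _)
  refine ⟨fun x => I x ∩ Ioi (e x) ∩ {y | ∀ x', e x' < y → y ∈ G x x'}, fun x =>
    inter_mem (inter_mem (hI x) ((hP x).Ioi_mem hκ _)) ((hP x).diagonal_mem e.injective (hG x)), ?_⟩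
  rintro ⟨x, y⟩ ⟨⟨hyI, hxy⟩, hyG⟩ ⟨x', y'⟩ ⟨⟨hy'I, hxy'⟩, hy'G⟩ (hF : F x y = F x' y')
  obtain rfl | hne := eq_or_ne x x'
  · exact congrArg _ (hFI x hyI hy'I hF)
  exfalso
  rcases lt_or_ge (e x') y with h | h <;> rcases lt_or_ge (e x) y' with h' | h'
  · exact hAB x x' hne y (hyG x' h).1.1 y' (hy'G x h').1.2 hF
  · exact (hyG x' h).2 ⟨y', h', hF.symm⟩
  · exact (hy'G x h').2 ⟨y, h, hF⟩
  · exact lt_irrefl _ ((hxy.trans_le h).trans (hxy'.trans_le h'))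

end IsNormalMeasure

theorem Ultrafilter.exists_subset_notMem_le_mk {Z : Type*} (D : Ultrafilter Z) {S : Set Z}
    (hS : ℵ₀ ≤ #S) : ∃ T ⊆ S, T ∉ D ∧ #S ≤ #T := by
  obtain ⟨e⟩ : Nonempty (S ⊕ S ≃ S) := Cardinal.eq.1 (by rw [mk_sum, lift_id, add_eq_self hS])
  have hcopy : ∀ {ι : S → S ⊕ S}, Injective ι → #((↑) '' range (e ∘ ι) : Set Z) = #S :=
    fun hι => by rw [mk_image_eq Subtype.val_injective, mk_range_eq _ (e.injective.comp hι)]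
  have hsub : ∀ ι : S → S ⊕ S, ((↑) '' range (e ∘ ι) : Set Z) ⊆ S := by
    rintro ι _ ⟨_, -, rfl⟩
    exact Subtype.coe_prop _
  by_cases h : ((↑) '' range (e ∘ Sum.inl) : Set Z) ∈ D
  · refine ⟨_, hsub Sum.inr, fun h' => ?_, (hcopy Sum.inr_injective).ge⟩
    obtain ⟨_, ⟨_, ⟨a, rfl⟩, rfl⟩, ⟨_, ⟨b, rfl⟩, hab⟩⟩ := D.nonempty_of_mem (inter_mem h h')
    exact Sum.inr_ne_inl (e.injective (Subtype.ext hab))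
  · exact ⟨_, hsub Sum.inl, h, (hcopy Sum.inl_injective).ge⟩

theorem Ultrafilter.exists_injective_eventuallyEq {Z : Type u} {Y : Type*} {κ : Cardinal.{u}}
    (hκ : ℵ₀ ≤ κ) (hZ : #Z ≤ κ) {D : Ultrafilter Z} (hD : ∀ S ∈ D, κ ≤ #S) {f : Z → Y}
    {S : Set Z} (hS : S ∈ D) (hf : InjOn f S) : ∃ h : Z → Y, Injective h ∧ f =ᶠ[D] h := by
  classical
  obtain ⟨T, hTS, hT, hST⟩ := D.exists_subset_notMem_le_mk (hκ.trans (hD S hS))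
  obtain ⟨j⟩ : Nonempty (Z ↪ f '' T) := by
    rw [← lift_mk_le', mk_image_eq_of_injOn_lift f T (hf.mono hTS)]
    exact lift_le.2 (hZ.trans ((hD S hS).trans hST))
  refine ⟨(S \ T).piecewise f (fun z => j z), (injective_piecewise_iff _).2
    ⟨hf.mono sdiff_subset, (Subtype.val_injective.comp j.injective).injOn, ?_⟩, ?_⟩
  · rintro z ⟨hzS, hzT⟩ z' - hfz
    obtain ⟨t, ht, hft⟩ := (j z').2
    exact hzT (hf hzS (hTS ht) (hfz.trans hft.symm) ▸ ht)
  · filter_upwards [sdiff_mem hS (Ultrafilter.compl_mem_iff_notMem.2 hT)] with z hz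
    exact (piecewise_eq_of_mem _ _ _ hz).symm

section Tuples

variable {lam : ℕ → Cardinal.{u}} {n : ℕ}

theorem mk_tup_succ_le (hinf : ℵ₀ ≤ lam n) (hX : #(Tup lam n) ≤ lam n) :
    #(Tup lam (n + 1)) ≤ lam n :=
  calc #(Tup lam (n + 1)) = #((lam n).ord.ToType) * #(Tup lam n) := by
        rw [← mk_congr (Fin.snocEquiv _), mk_prod, lift_id, lift_id]; rfl
    _ ≤ lam n * lam n := by rw [mk_ord_toType]; exact mul_le_mul_right hX _
    _ = lam n := mul_eq_self hinf

/-- `D'` is the sum `D * P`, with `Tup lam (n + 1)` identified with the disjoint sum of copies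
of `λ_n` indexed by `Tup lam n` through `Fin.snoc`. -/
def IsUltrafilterSum (D : Ultrafilter (Tup lam n)) (P : Tup lam n → Ultrafilter (lam n).ord.ToType)
    (D' : Ultrafilter (Tup lam (n + 1))) : Prop :=
  ∀ S : Set (Tup lam (n + 1)), S ∈ D' ↔ ∀ᶠ x : Tup lam n in D, ∀ᶠ y : (lam n).ord.ToType in P x,
    (Fin.snoc x y : Tup lam (n + 1)) ∈ S

namespace IsUltrafilterSum

variable {D : Ultrafilter (Tup lam n)} {P : Tup lam n → Ultrafilter (lam n).ord.ToType}
  {D' : Ultrafilter (Tup lam (n + 1))}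

theorem le_mk_of_mem (h : IsUltrafilterSum D P D') (hP : ∀ x, IsNormalMeasure (lam n) (P x))
    {S : Set (Tup lam (n + 1))} (hS : S ∈ D') : lam n ≤ #S := by
  obtain ⟨x, hx⟩ := ((h S).1 hS).exists
  exact (hP x).le_mk_of_mem hx |>.trans (mk_preimage_of_injective _ _
    (Fin.snoc_right_injective (α := fun i => (lam i).ord.ToType) x))

theorem tendsto_init (h : IsUltrafilterSum D P D') :
    Tendsto (β := Tup lam n) Fin.init (D' : Filter (Tup lam (n + 1))) D :=
  fun s hs => (h _).2 <| by
    filter_upwards [hs] with x hx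
    exact Eventually.of_forall fun y => by simpa [Fin.init_snoc] using hx

theorem exists_injOn (h : IsUltrafilterSum D P D') (hinf : ℵ₀ ≤ lam n)
    (hX : #(Tup lam n) ≤ lam n) (hP : ∀ x, IsNormalMeasure (lam n) (P x))
    (hPinj : ∃ K ∈ D, InjOn P K) {Y : Type*} {f : Tup lam (n + 1) → Y}
    (hf : ∀ᶠ x in D, ∃ A ∈ P x, InjOn (fun y => f (Fin.snoc x y)) A) : ∃ S ∈ D', InjOn f S := by
  obtain ⟨K, hK, hPK⟩ := hPinj
  set W : Set (Tup lam n) := {x | x ∈ K ∧ ∃ A ∈ P x, InjOn (fun y => f (Fin.snoc x y)) A}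
  obtain ⟨S, hS, hSinj⟩ := IsNormalMeasure.exists_injOn_uncurry hinf ((mk_set_le W).trans hX)
    (fun w => hP w) (hPK.mono fun _ hx => hx.1).injective
    (F := fun (w : W) y => f (Fin.snoc w.1 y)) fun w => w.2.2
  refine ⟨(fun q : W × (lam n).ord.ToType => (Fin.snoc q.1.1 q.2 : Tup lam (n + 1))) ''
    {q | q.2 ∈ S q.1}, (h _).2 ?_, hSinj.image_of_comp⟩
  filter_upwards [inter_mem hK hf] with x hx
  filter_upwards [hS ⟨x, hx⟩] with y hy
  exact ⟨(⟨x, hx⟩, y), hy, rfl⟩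

theorem injective_or_comp_init (h : IsUltrafilterSum D P D') (hinf : ℵ₀ ≤ lam n)
    (hX : #(Tup lam n) ≤ lam n) (hP : ∀ x, IsNormalMeasure (lam n) (P x))
    (hPinj : ∃ K ∈ D, InjOn P K) {Y : Type*} (f : Tup lam (n + 1) → Y) :
    (∃ g, Injective g ∧ f =ᶠ[D'] g) ∨ ∃ g : Tup lam n → Y, f =ᶠ[D'] g ∘ Fin.init := by
  by_cases hC : ∀ᶠ x : Tup lam n in D,
      ∃ c, ∀ᶠ y : (lam n).ord.ToType in P x, f (Fin.snoc x y) = c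
  · have : Nonempty Y := (nonempty_of_neBot (D' : Filter _)).map f
    refine Or.inr ⟨fun x => Classical.epsilon fun c =>
      ∀ᶠ y : (lam n).ord.ToType in P x, f (Fin.snoc x y) = c, (h _).2 ?_⟩
    filter_upwards [hC] with x hx
    simpa only [comp_apply, Fin.init_snoc] using Classical.epsilon_spec hx
  · have hinj : ∀ᶠ x in D, ∃ A ∈ P x, InjOn (fun y => f (Fin.snoc x y)) A := by
      filter_upwards [Ultrafilter.eventually_not.2 hC] with x hx
      exact ((hP x).injOn_or_eventually_const _).resolve_right hx
    obtain ⟨S, hS, hfS⟩ := h.exists_injOn hinf hX hP hPinj hinj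
    exact Or.inl (Ultrafilter.exists_injective_eventuallyEq hinf (mk_tup_succ_le hinf hX)
      (fun _ => h.le_mk_of_mem hP) hS hfS)

end IsUltrafilterSum

theorem mk_tup_le (hinf : ∀ n, ℵ₀ ≤ lam n) (hmono : Monotone lam) (n : ℕ) :
    #(Tup lam n) ≤ lam n := by
  induction n with
  | zero => exact (mk_le_aleph0 (α := Tup lam 0)).trans (hinf 0)
  | succ n ih => exact (mk_tup_succ_le (hinf n) ih).trans (hmono n.le_succ)

theorem isUltrafilterSum_pure_map (D : Ultrafilter (Tup lam 1)) :
    IsUltrafilterSum (pure default) (fun _ => D.map fun x => x ⟨0, Nat.zero_lt_one⟩) D := by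
  have hsnoc : ∀ z : Tup lam 1, (Fin.snoc default (z 0) : Tup lam 1) = z := fun z =>
    funext fun i => by
      obtain rfl : i = Fin.last 0 := Subsingleton.elim (α := Fin 1) _ _
      exact Fin.snoc_last ..
  intro S
  change S ∈ D ↔ (fun z => (Fin.snoc default (z 0) : Tup lam 1)) ⁻¹' S ∈ D
  simp only [preimage, hsnoc, ofPred_mem_eq]

end Tuples

/-- `d n` and `p n` are the paper's `D_{n+1}` and `π_{n+1}`. -/
theorem classification_of_functions (lam : ℕ → Cardinal.{u})
    (hinf : ∀ n, Cardinal.aleph0 ≤ lam n) (hmono : Monotone lam)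
    (d : (n : ℕ) → Ultrafilter (Tup lam (n + 1)))
    (p : (n : ℕ) → Tup lam (n + 1) → Ultrafilter (lam (n + 1)).ord.ToType)
    (hbase : IsNormalMeasure (lam 0) ((d 0).map fun x => x ⟨0, Nat.zero_lt_one⟩))
    (hpnorm : ∀ n x, IsNormalMeasure (lam (n + 1)) (p n x))
    (hpinj : ∀ n, ∃ K ∈ d n, Set.InjOn (p n) K)
    (hsum : ∀ n (S : Set (Tup lam (n + 2))),
      S ∈ d (n + 1) ↔
        {x : Tup lam (n + 1) |
          {y : (lam (n + 1)).ord.ToType |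
            (Fin.snoc x y : Tup lam (n + 2)) ∈ S} ∈ p n x} ∈ d n)
    (m : ℕ) {Y : Type v} (f : Tup lam (m + 1) → Y) :
    (∃ h : Tup lam (m + 1) → Y, Function.Injective h ∧ {x | f x = h x} ∈ d m) ∨
    (∃ (k : ℕ) (_ : k ≤ m) (h : Tup lam k → Y),
      {x : Tup lam (m + 1) |
        f x = h (fun i : Fin k => x (Fin.castLE (by omega) i))} ∈ d m) := by
  have hX := mk_tup_le hinf hmono
  induction m with
  | zero =>
    rcases (isUltrafilterSum_pure_map (d 0)).injective_or_comp_init (hinf 0) (hX 0)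
      (fun _ => hbase) ⟨univ, univ_mem, subsingleton_of_subsingleton.injOn _⟩ f with hf | ⟨g, hg⟩
    · exact Or.inl hf
    · exact Or.inr ⟨0, le_rfl, g, hg⟩
  | succ m ih =>
    have hsum' : IsUltrafilterSum (d m) (p m) (d (m + 1)) := hsum m
    rcases hsum'.injective_or_comp_init (hinf _) (hX _) (hpnorm m) (hpinj m) f with hf | ⟨g, hg⟩
    · exact Or.inl hf
    obtain ⟨k, hk, h, hgh⟩ : ∃ (k : ℕ) (hk : k ≤ m + 1) (h : Tup lam k → Y),
        g =ᶠ[d m] fun x => h fun i => x (Fin.castLE hk i) := by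
      rcases ih g with ⟨h, -, hgh⟩ | ⟨k, hk, h, hgh⟩
      · exact ⟨m + 1, le_rfl, h, hgh⟩
      · exact ⟨k, by omega, h, hgh⟩
    exact Or.inr ⟨k, hk, h, hg.trans (hgh.comp_tendsto hsum'.tendsto_init)⟩
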